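/- Let G be a finite simple graph on n vertices with cycle-space dimension ω(G), and let k ≥ 2. Then α_k(G) ≥ ((k−1)/k)·(n − ω(G)). -/

import Mathlib

open SimpleGraph

/-- A set `S` is a generalized `k`-independent set in `G` if the induced subgraph `G[S]`
contains no tree on `k` vertices, equivalently every connected component of `G[S]`
has at most `k - 1` vertices. -/
def IsGenKIndep {V : Type*} (G : SimpleGraph V) (k : ℕ) (S : Set V) : Prop :=
  ∀ c : (G.induce S).ConnectedComponent, Nat.card c.supp ≤ k - 1

/-- The generalized `k`-independence number: the maximum size of a generalized
`k`-independent set. -/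
noncomputable def alphaK {V : Type*} (G : SimpleGraph V) (k : ℕ) : ℕ :=
  sSup {m | ∃ S : Set V, IsGenKIndep G k S ∧ S.ncard = m}

/-- The dimension of the cycle space: `|E| - |V| + c(G)` (as a natural number;
note `|E| + c(G) ≥ |V|` always holds). -/
noncomputable def cycleDim {V : Type*} (G : SimpleGraph V) : ℕ :=
  Nat.card G.edgeSet + Nat.card G.ConnectedComponent - Nat.card V

/-- `x` lies on a cycle of `G`. -/
def OnCycle {V : Type*} (G : SimpleGraph V) (x : V) : Prop :=
  ∃ (u : V) (w : G.Walk u u), w.IsCycle ∧ x ∈ w.support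

/-!
Deleting a vertex lowers `|E| + c` by at least one (so `|V| ≤ |E| + c`), and by at least two
if the vertex lies on a cycle, because two of its neighbours stay connected. Deleting cycle
vertices one at a time therefore leaves an induced forest on at least `n - ω(G)` vertices.
In a forest, take a set `D` of at least `k` vertices that is joined to the rest only through
one of its vertices `b`, with `D` as small as possible: then every component of `D - b` has
fewer than `k` vertices. Keep `D - b`, delete `D`, and repeat. Each round keeps
`|D| - 1 ≥ (k - 1)/k · |D|` of the `|D|` vertices it uses.
-/

namespace SimpleGraph

variable {V : Type*} {G : SimpleGraph V}

def ReachableIn (G : SimpleGraph V) (A : Set V) (x y : V) : Prop :=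
  ∃ p : G.Walk x y, ∀ z ∈ p.support, z ∈ A

namespace ReachableIn

variable {A B : Set V} {x y z : V}

lemma refl (hx : x ∈ A) : G.ReachableIn A x x := ⟨.nil, by simpa⟩

lemma left_mem (h : G.ReachableIn A x y) : x ∈ A :=
  h.elim fun p hp => hp x p.start_mem_support

lemma right_mem (h : G.ReachableIn A x y) : y ∈ A :=
  h.elim fun p hp => hp y p.end_mem_support

lemma symm (h : G.ReachableIn A x y) : G.ReachableIn A y x :=
  h.elim fun p hp => ⟨p.reverse, by simpa using hp⟩

lemma trans (h : G.ReachableIn A x y) (h' : G.ReachableIn A y z) : G.ReachableIn A x z := by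
  obtain ⟨p, hp⟩ := h
  obtain ⟨q, hq⟩ := h'
  exact ⟨p.append q, fun w hw => (Walk.mem_support_append_iff p q).1 hw |>.elim (hp w) (hq w)⟩

lemma mono (hAB : A ⊆ B) (h : G.ReachableIn A x y) : G.ReachableIn B x y :=
  h.elim fun p hp => ⟨p, fun w hw => hAB (hp w hw)⟩

lemma of_forall_adj_mem (h : G.ReachableIn A x y) (hx : x ∈ B)
    (hB : ∀ z ∈ B, ∀ w ∈ A, G.Adj z w → w ∈ B) : G.ReachableIn B x y := by
  obtain ⟨p, hp⟩ := h
  refine ⟨p, ?_⟩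
  induction p with
  | nil => simpa
  | cons had q ih =>
    simp only [Walk.support_cons, List.mem_cons, forall_eq_or_imp] at hp ⊢
    exact ⟨hx, ih (hB _ hx _ (hp.2 _ q.start_mem_support) had) hp.2⟩

lemma sdiff_singleton_of_not_reachableIn (h : G.ReachableIn A x y) {v : V}
    (hxv : ¬G.ReachableIn A x v) : G.ReachableIn (A \ {v}) x y := by
  classical
  obtain ⟨p, hp⟩ := h
  refine ⟨p, fun z hz => ⟨hp z hz, ?_⟩⟩
  rintro rfl
  exact hxv ⟨p.takeUntil z hz, fun w hw => hp w (p.support_takeUntil_subset_support hz hw)⟩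

lemma exists_adj_reachableIn_sdiff_singleton (h : G.ReachableIn A x y) (hyx : y ≠ x) :
    ∃ u ∈ A, G.Adj x u ∧ G.ReachableIn (A \ {x}) u y := by
  classical
  obtain ⟨p, hp⟩ := h
  have of_isPath : ∀ q : G.Walk x y, q.IsPath → (∀ z ∈ q.support, z ∈ A) →
      ∃ u ∈ A, G.Adj x u ∧ G.ReachableIn (A \ {x}) u y := by
    intro q hq hqA
    cases q with
    | nil => exact absurd rfl hyx
    | cons had q =>
      rw [Walk.cons_isPath_iff] at hq
      simp only [Walk.support_cons, List.mem_cons, forall_eq_or_imp] at hqA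
      exact ⟨_, hqA.2 _ q.start_mem_support, had,
        q, fun z hz => ⟨hqA.2 z hz, by rintro rfl; exact hq.2 hz⟩⟩
  exact of_isPath p.bypass p.bypass_isPath fun z hz => hp z (p.support_bypass_subset_support hz)

end ReachableIn

lemma Adj.reachableIn {A : Set V} {x y : V} (h : G.Adj x y) (hx : x ∈ A) (hy : y ∈ A) :
    G.ReachableIn A x y :=
  ⟨.cons h .nil, by simp [hx, hy]⟩

lemma reachable_induce_iff {A : Set V} {x y : A} :
    (G.induce A).Reachable x y ↔ G.ReachableIn A x y := by
  refine ⟨fun ⟨p⟩ => ⟨p.map (Embedding.induce A).toHom, fun z hz => ?_⟩,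
    fun ⟨p, hp⟩ => ⟨p.induce A hp⟩⟩
  obtain ⟨z, -, rfl⟩ := List.mem_map.1 ((Walk.support_map _ p) ▸ hz)
  exact z.2

lemma connectedComponentMk_induce_eq_iff {A : Set V} {x y : A} :
    (G.induce A).connectedComponentMk x = (G.induce A).connectedComponentMk y ↔
      G.ReachableIn A x y :=
  ConnectedComponent.eq.trans reachable_induce_iff

lemma card_supp_connectedComponentMk_induce {A : Set V} (x : A) :
    Nat.card ((G.induce A).connectedComponentMk x).supp = {y | G.ReachableIn A x y}.ncard := by
  have himage : Subtype.val '' ((G.induce A).connectedComponentMk x).supp =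
      {y | G.ReachableIn A x y} := by
    ext y
    constructor
    · rintro ⟨y, hy, rfl⟩
      exact (connectedComponentMk_induce_eq_iff.1 hy).symm
    · exact fun h => ⟨⟨y, h.right_mem⟩, connectedComponentMk_induce_eq_iff.2 h.symm, rfl⟩
  rw [← himage, Set.ncard_image_of_injective _ Subtype.val_injective, Nat.card_coe_set_eq]

lemma IsAcyclic.eq_of_adj_of_reachableIn {W : Set V} (hW : (G.induce W).IsAcyclic) {b u w : V}
    (hb : b ∈ W) (hbu : G.Adj b u) (hbw : G.Adj b w) (huw : G.ReachableIn (W \ {b}) u w) :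
    u = w := by
  classical
  obtain ⟨p, hp⟩ := huw
  have hpW : ∀ z ∈ p.support, z ∈ W := fun z hz => (hp z hz).1
  let q := (p.induce W hpW).bypass
  have hbq : ⟨b, hb⟩ ∉ q.support := fun h => by
    have := Walk.support_bypass_subset_support _ h
    simp only [Walk.support_induce, List.mem_attachWith] at this
    exact (hp b this).2 rfl
  have hbu' : (G.induce W).Adj ⟨b, hb⟩ ⟨u, hpW u p.start_mem_support⟩ := hbu
  have := hW.eq_snd_of_adj_start ((p.induce W hpW).bypass_isPath.cons hbq (h := hbu'))
    (w := ⟨w, hpW w p.end_mem_support⟩) hbw (Walk.end_mem_support _)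
  rw [Walk.snd_cons] at this
  exact congrArg Subtype.val this.symm

lemma card_edgeSet_induce_sdiff_singleton_add_ncard_le [Finite V] {W : Set V} {v : V}
    (hv : v ∈ W) :
    Nat.card (G.induce (W \ {v})).edgeSet + (W ∩ G.neighborSet v).ncard ≤
      Nat.card (G.induce W).edgeSet := by
  let f : (G.induce (W \ {v})).edgeSet ⊕ ↥(W ∩ G.neighborSet v) → (G.induce W).edgeSet :=
    Sum.elim (G.induceHomOfLE Set.sdiff_subset).mapEdgeSet
      fun y => ⟨s(⟨v, hv⟩, ⟨y, y.2.1⟩), y.2.2⟩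
  have hf : f.Injective := by
    refine (G.induceHomOfLE _).mapEdgeSet.injective.sumElim
      (fun y y' h => ?_) ?_
    · have h := congrArg Subtype.val h
      rw [Sym2.congr_right] at h
      exact Subtype.ext (Subtype.mk.inj h)
    rintro ⟨e, he⟩ y h
    have hve : (⟨v, hv⟩ : W) ∈
        ((G.induceHomOfLE Set.sdiff_subset).mapEdgeSet ⟨e, he⟩ : (G.induce W).edgeSet).1 := by
      rw [h]
      exact Sym2.mem_mk_left _ _
    obtain ⟨z, -, hz⟩ := Sym2.mem_map.1 hve
    exact z.2.2 (congrArg Subtype.val hz)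
  simpa [Nat.card_sum, Nat.card_coe_set_eq] using Nat.card_le_card_of_injective f hf

lemma card_connectedComponent_induce_sdiff_singleton_add_one_le [Finite V] {W B : Set V} {v : V}
    (hv : v ∈ W) (hB : B ⊆ W \ {v})
    (hcover : ∀ u ∈ W, G.Adj v u → ∃ b ∈ B, G.ReachableIn (W \ {v}) b u) :
    Nat.card (G.induce (W \ {v})).ConnectedComponent + 1 ≤
      Nat.card (G.induce W).ConnectedComponent + B.ncard := by
  classical
  let cv := (G.induce W).connectedComponentMk ⟨v, hv⟩
  have hout (c : (G.induce W).ConnectedComponent) (hc : c ≠ cv) : c.out.1 ∈ W \ {v} :=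
    ⟨c.out.2, fun h => hc (c.out_eq.symm.trans (congrArg _ (Subtype.ext h)))⟩
  -- A component of `G[W \ {v}]` either is all that is left of a component of `G[W]` other
  -- than that of `v`, or contains a neighbour of `v` and hence an element of `B`.
  let f : (G.induce W).ConnectedComponent ⊕ B →
      Option (G.induce (W \ {v})).ConnectedComponent :=
    Sum.elim
      (fun c => if hc : c = cv then none
        else some ((G.induce _).connectedComponentMk ⟨_, hout c hc⟩))
      (fun b => some ((G.induce _).connectedComponentMk ⟨b, hB b.2⟩))
  have hf : f.Surjective := by
    rintro (_ | c')
    · exact ⟨.inl cv, by simp [f]⟩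
    refine c'.ind fun ⟨y, hyW, hyv⟩ => ?_
    by_cases hvy : G.ReachableIn W v y
    · obtain ⟨u, huW, hvu, huy⟩ := hvy.exists_adj_reachableIn_sdiff_singleton hyv
      obtain ⟨b, hb, hbu⟩ := hcover u huW hvu
      exact ⟨.inr ⟨b, hb⟩,
        congrArg some (connectedComponentMk_induce_eq_iff.2 (hbu.trans huy))⟩
    · let c := (G.induce W).connectedComponentMk ⟨y, hyW⟩
      have hc : c ≠ cv := fun h => hvy (connectedComponentMk_induce_eq_iff.1 h).symm
      have hy : G.ReachableIn W c.out y := connectedComponentMk_induce_eq_iff.1 c.out_eq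
      refine ⟨.inl c, ?_⟩
      simp only [f, Sum.elim_inl, dif_neg hc]
      exact congrArg some (connectedComponentMk_induce_eq_iff.2
        (hy.sdiff_singleton_of_not_reachableIn fun h => hvy (h.symm.trans hy)))
  have := Nat.card_le_card_of_surjective f hf
  rwa [Finite.card_option, Nat.card_sum, Nat.card_coe_set_eq] at this

lemma ncard_le_card_edgeSet_add_card_connectedComponent_induce [Finite V] (W : Set V) :
    W.ncard ≤ Nat.card (G.induce W).edgeSet + Nat.card (G.induce W).ConnectedComponent := by
  induction hn : W.ncard using Nat.strong_induction_on generalizing W with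
  | _ n ih =>
  obtain rfl | ⟨v, hv⟩ := W.eq_empty_or_nonempty
  · simp [← hn]
  have hWv := Set.ncard_sdiff_singleton_add_one hv
  have hIH := ih _ (by omega) (W := W \ {v}) rfl
  have hE := card_edgeSet_induce_sdiff_singleton_add_ncard_le (G := G) hv
  have hC := card_connectedComponent_induce_sdiff_singleton_add_one_le (G := G) hv
    (B := W ∩ G.neighborSet v) (fun u hu => ⟨hu.1, hu.2.ne'⟩)
    fun u huW hvu => ⟨u, ⟨huW, hvu⟩, .refl ⟨huW, hvu.ne'⟩⟩
  omega

lemma Walk.IsCycle.exists_adj_adj_reachableIn {v : V} {c : G.Walk v v} (hc : c.IsCycle) :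
    ∃ u w, u ≠ w ∧ G.Adj v u ∧ G.Adj v w ∧
      G.ReachableIn ({z | z ∈ c.support} \ {v}) u w := by
  classical
  have hnil := hc.not_nil
  have hpen : c.penultimate ∈ c.tail.support := by
    rw [c.support_tail_of_not_nil hnil]
    exact List.mem_of_ne_of_mem (c.adj_penultimate hnil).ne
      (c.cons_tail_support.symm ▸ c.getVert_mem_support _)
  refine ⟨c.snd, c.penultimate, hc.snd_ne_penultimate, c.adj_snd hnil,
    (c.adj_penultimate hnil).symm, c.tail.takeUntil _ hpen, fun z hz => ⟨?_, ?_⟩⟩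
  · have hz := c.tail.support_takeUntil_subset_support hpen hz
    rw [c.support_tail_of_not_nil hnil] at hz
    exact List.mem_of_mem_tail hz
  · rintro rfl
    exact Walk.endpoint_notMem_support_takeUntil hc.isPath_tail hpen
      (c.adj_penultimate hnil).ne' hz

lemma exists_add_two_le_of_not_isAcyclic_induce [Finite V] {W : Set V}
    (hW : ¬(G.induce W).IsAcyclic) :
    ∃ v ∈ W, Nat.card (G.induce (W \ {v})).edgeSet +
        Nat.card (G.induce (W \ {v})).ConnectedComponent + 2 ≤
      Nat.card (G.induce W).edgeSet + Nat.card (G.induce W).ConnectedComponent := by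
  obtain ⟨a, c, hc⟩ : ∃ a, ∃ c : (G.induce W).Walk a a, c.IsCycle := by
    simpa [IsAcyclic] using hW
  have hsupp : {z | z ∈ (c.map (Embedding.induce W).toHom).support} ⊆ W := fun z hz => by
    obtain ⟨z, -, rfl⟩ := List.mem_map.1 ((Walk.support_map _ _) ▸ hz)
    exact z.2
  obtain ⟨u, w, huw, hau, haw, hreach⟩ :=
    (hc.map (f := (Embedding.induce W).toHom) Subtype.val_injective).exists_adj_adj_reachableIn
  replace hreach := hreach.mono (Set.sdiff_subset_sdiff_left hsupp)
  refine ⟨a, a.2, ?_⟩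
  have hwN : w ∈ W ∩ G.neighborSet a := ⟨hreach.right_mem.1, haw⟩
  have hE := card_edgeSet_induce_sdiff_singleton_add_ncard_le (G := G) a.2
  -- `u` and `w` are joined in `G[W \ {a}]`, so `w` can be left out of `B`.
  have hC := card_connectedComponent_induce_sdiff_singleton_add_one_le (G := G) a.2
    (B := (W ∩ G.neighborSet a) \ {w}) (fun y hy => ⟨hy.1.1, hy.1.2.ne'⟩) fun y hyW hay => by
      by_cases hyw : y = w
      · subst hyw
        exact ⟨u, ⟨⟨hreach.left_mem.1, hau⟩, huw⟩, hreach⟩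
      · exact ⟨y, ⟨⟨hyW, hay⟩, hyw⟩, .refl ⟨hyW, hay.ne'⟩⟩
  have := Set.ncard_sdiff_singleton_add_one hwN
  omega

lemma exists_isAcyclic_induce_subset [Finite V] (W : Set V) :
    ∃ F ⊆ W, (G.induce F).IsAcyclic ∧ 2 * W.ncard ≤
      F.ncard + Nat.card (G.induce W).edgeSet + Nat.card (G.induce W).ConnectedComponent := by
  induction hn : W.ncard using Nat.strong_induction_on generalizing W with
  | _ n ih =>
  by_cases hW : (G.induce W).IsAcyclic
  · have := ncard_le_card_edgeSet_add_card_connectedComponent_induce (G := G) W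
    exact ⟨W, subset_rfl, hW, by omega⟩
  obtain ⟨v, hv, hvE⟩ := exists_add_two_le_of_not_isAcyclic_induce hW
  have := Set.ncard_sdiff_singleton_add_one hv
  obtain ⟨F, hFW, hF, hFcard⟩ := ih _ (by omega) (W := W \ {v}) rfl
  exact ⟨F, hFW.trans Set.sdiff_subset, hF, by omega⟩

end SimpleGraph

section

variable {V : Type*} {G : SimpleGraph V}

lemma isGenKIndep_iff {k : ℕ} {S : Set V} :
    IsGenKIndep G k S ↔ ∀ x ∈ S, {y | G.ReachableIn S x y}.ncard ≤ k - 1 := by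
  refine ⟨fun h x hx => ?_, fun h c => ?_⟩
  · rw [← card_supp_connectedComponentMk_induce ⟨x, hx⟩]
    exact h _
  · refine c.ind fun x => ?_
    rw [card_supp_connectedComponentMk_induce]
    exact h x x.2

lemma IsGenKIndep.union [Finite V] {k : ℕ} {A B : Set V}
    (hAB : ∀ x ∈ A, ∀ y ∈ B, ¬G.Adj x y) (hA : IsGenKIndep G k A)
    (hB : IsGenKIndep G k B) : IsGenKIndep G k (A ∪ B) := by
  have of_mem_left :
      ∀ {A B : Set V}, (∀ x ∈ A, ∀ y ∈ B, ¬G.Adj x y) → IsGenKIndep G k A →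
      ∀ x ∈ A, {y | G.ReachableIn (A ∪ B) x y}.ncard ≤ k - 1 := by
    intro A B hAB hA x hx
    refine le_trans (Set.ncard_le_ncard fun y hy => ?_) (isGenKIndep_iff.1 hA x hx)
    refine ReachableIn.of_forall_adj_mem hy hx fun z hz w hw hzw => ?_
    exact hw.resolve_right fun hwB => hAB z hz w hwB hzw
  refine isGenKIndep_iff.2 fun x hx => hx.elim (of_mem_left hAB hA x) fun hxB => ?_
  rw [Set.union_comm]
  exact of_mem_left (fun y hy x hx hxy => hAB x hx y hy hxy.symm) hB x hxB

lemma IsGenKIndep.ncard_le_alphaK [Finite V] {k : ℕ} {S : Set V} (h : IsGenKIndep G k S) :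
    S.ncard ≤ alphaK G k :=
  le_csSup ⟨Nat.card V, by rintro _ ⟨T, -, rfl⟩; exact T.ncard_le_card⟩ ⟨S, h, rfl⟩

structure IsBranch (G : SimpleGraph V) (k : ℕ) (W D : Set V) (b : V) : Prop where
  mem : b ∈ D
  subset : D ⊆ W
  le_ncard : k ≤ D.ncard
  mem_of_adj : ∀ x ∈ D \ {b}, ∀ y ∈ W, G.Adj x y → y ∈ D

lemma IsBranch.isBranch_reachableIn {k : ℕ} {W D : Set V} {b x u : V} (hD : IsBranch G k W D b)
    (hx : x ∈ D \ {b}) (hk : k ≤ {y | G.ReachableIn (D \ {b}) x y}.ncard)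
    (hu : G.ReachableIn (D \ {b}) x u)
    (huniq : ∀ z, G.ReachableIn (D \ {b}) x z → G.Adj b z → z = u) :
    IsBranch G k W {y | G.ReachableIn (D \ {b}) x y} u where
  mem := hu
  subset _ hy := hD.subset hy.right_mem.1
  le_ncard := hk
  mem_of_adj z hz y hy hzy := by
    have hyD := hD.mem_of_adj z hz.1.right_mem y hy hzy
    by_cases hyb : y = b
    · subst hyb
      exact absurd (huniq z hz.1 hzy.symm) hz.2
    · exact hz.1.trans (hzy.reachableIn hz.1.right_mem ⟨hyD, hyb⟩)

lemma IsBranch.exists_isGenKIndep_sdiff [Finite V] {k : ℕ} {W D : Set V} {b : V}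
    (hW : (G.induce W).IsAcyclic) (hD : IsBranch G k W D b) :
    ∃ D' b', IsBranch G k W D' b' ∧ IsGenKIndep G k (D' \ {b'}) := by
  induction hn : D.ncard using Nat.strong_induction_on generalizing D b with
  | _ n ih =>
  by_cases hind : IsGenKIndep G k (D \ {b})
  · exact ⟨D, b, hD, hind⟩
  rw [isGenKIndep_iff] at hind
  push Not at hind
  obtain ⟨x, hx, hxk⟩ := hind
  have hK : {y | G.ReachableIn (D \ {b}) x y} ⊆ D \ {b} := fun y hy => hy.right_mem
  have hlt : {y | G.ReachableIn (D \ {b}) x y}.ncard < n :=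
    hn ▸ Set.ncard_lt_ncard (hK.trans_ssubset (Set.sdiff_singleton_ssubset.2 hD.mem))
  -- By acyclicity `b` has at most one neighbour `u` in the component of `x` in `G[D \ {b}]`,
  -- and that component is a smaller branch hanging at `u`.
  obtain ⟨u, hu, huniq⟩ : ∃ u, G.ReachableIn (D \ {b}) x u ∧
      ∀ z, G.ReachableIn (D \ {b}) x z → G.Adj b z → z = u := by
    by_cases h : ∃ u, G.ReachableIn (D \ {b}) x u ∧ G.Adj b u
    · obtain ⟨u, hu, hbu⟩ := h
      refine ⟨u, hu, fun z hz hbz => ?_⟩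
      refine (hW.eq_of_adj_of_reachableIn (hD.subset hD.mem) hbu hbz ?_).symm
      exact (hu.symm.trans hz).mono (Set.sdiff_subset_sdiff_left hD.subset)
    · push Not at h
      exact ⟨x, .refl hx, fun z hz hbz => absurd hbz (h z hz)⟩
  exact ih _ hlt (hD.isBranch_reachableIn hx (by omega) hu huniq) rfl

lemma exists_isGenKIndep_subset_of_isAcyclic [Finite V] (k : ℕ) {W : Set V}
    (hW : (G.induce W).IsAcyclic) :
    ∃ S ⊆ W, IsGenKIndep G k S ∧ (k - 1) * W.ncard ≤ k * S.ncard := by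
  induction hn : W.ncard using Nat.strong_induction_on generalizing W with
  | _ n ih =>
  by_cases hind : IsGenKIndep G k W
  · exact ⟨W, subset_rfl, hind, hn ▸ Nat.mul_le_mul_right _ (Nat.sub_le k 1)⟩
  rw [isGenKIndep_iff] at hind
  push Not at hind
  obtain ⟨x, hx, hxk⟩ := hind
  have hWk : k ≤ W.ncard := by
    have := Set.ncard_le_ncard (show {y | G.ReachableIn W x y} ⊆ W from fun y hy => hy.right_mem)
    omega
  have hWx : IsBranch G k W W x := ⟨hx, subset_rfl, hWk, fun _ _ _ hy _ => hy⟩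
  obtain ⟨D, b, hD, hDind⟩ := hWx.exists_isGenKIndep_sdiff hW
  have hsplit : (W \ D).ncard + D.ncard = n := hn ▸ Set.ncard_sdiff_add_ncard_of_subset hD.subset
  have hD0 : 0 < D.ncard := (Set.ncard_pos (Set.toFinite D)).2 ⟨b, hD.mem⟩
  obtain ⟨S', hS'W, hS', hS'card⟩ := ih _ (by omega) (W := W \ D)
    (hW.embedding (G.induceHomOfLE Set.sdiff_subset)) rfl
  have hdisj : Disjoint (D \ {b}) S' :=
    Set.disjoint_left.2 fun y hy hy' => (hS'W hy').2 hy.1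
  refine ⟨(D \ {b}) ∪ S', Set.union_subset (Set.sdiff_subset.trans hD.subset)
    (hS'W.trans Set.sdiff_subset), hDind.union ?_ hS', ?_⟩
  · exact fun y hy z hz hyz => (hS'W hz).2 (hD.mem_of_adj y hy z (hS'W hz).1 hyz)
  · have hDk : (k - 1) * D.ncard ≤ k * (D.ncard - 1) := by
      rw [Nat.sub_one_mul, Nat.mul_sub_one]
      have := hD.le_ncard
      omega
    rw [Set.ncard_union_eq hdisj, Set.ncard_sdiff_singleton_of_mem hD.mem, ← hsplit, mul_add,
      mul_add]
    omega

end

/-- For every graph `G` on `n` vertices, `α_k(G) ≥ ((k-1)/k)·(n - ω(G))`. -/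
theorem alphaK_lower_bound {V : Type*} [Fintype V] (G : SimpleGraph V) (k : ℕ)
    (hk : 2 ≤ k) :
    ((k : ℚ) - 1) / k * ((Nat.card V : ℚ) - cycleDim G) ≤ alphaK G k := by
  obtain ⟨F, -, hF, hFcard⟩ := G.exists_isAcyclic_induce_subset Set.univ
  obtain ⟨S, -, hS, hScard⟩ := exists_isGenKIndep_subset_of_isAcyclic k hF
  have hn := G.ncard_le_card_edgeSet_add_card_connectedComponent_induce Set.univ
  have hE : Nat.card (G.induce Set.univ).edgeSet = Nat.card G.edgeSet :=
    Nat.card_congr (induceUnivIso G).mapEdgeSet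
  have hC : Nat.card (G.induce Set.univ).ConnectedComponent = Nat.card G.ConnectedComponent :=
    Nat.card_congr (induceUnivIso G).connectedComponentEquiv
  rw [hE, hC, Set.ncard_univ] at hn hFcard
  have hk' : (1 : ℚ) ≤ k := by exact_mod_cast (by omega : 1 ≤ k)
  have hVF : (Nat.card V : ℚ) - cycleDim G ≤ F.ncard := by
    rw [cycleDim, Nat.cast_sub hn]
    have := (Nat.cast_le (α := ℚ)).2 hFcard
    push_cast at this ⊢
    linarith
  have hFS : ((k : ℚ) - 1) * F.ncard ≤ k * S.ncard := by
    have := (Nat.cast_le (α := ℚ)).2 hScard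
    push_cast [Nat.cast_sub (by omega : 1 ≤ k)] at this
    exact this
  calc ((k : ℚ) - 1) / k * ((Nat.card V : ℚ) - cycleDim G)
      ≤ ((k : ℚ) - 1) / k * F.ncard := by gcongr
    _ ≤ S.ncard := by
        rw [div_mul_eq_mul_div, div_le_iff₀ (by linarith)]
        linarith
    _ ≤ alphaK G k := by exact_mod_cast hS.ncard_le_alphaK
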